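/- Let p ∈ (1,∞). Then there is a constant c_p ≥ 0 such that the following holds: whenever X is a Banach space, (T(s))_{s≥0} is a C₀-semigroup on X with M := sup_{s≥0} ‖T(s)‖ < ∞, 0 < a < b < ∞, μ is a finite complex Borel measure on [0,∞) supported in [a,b], and C ≥ 0 is an L^p(ℝ;X)-convolution bound for μ, then ‖∫_{[a,b]} T(s)x μ(ds)‖ ≤ c_p M² (1 + log(b/a)) C ‖x‖ for all x ∈ X. -/

import Mathlib

/-!
Let `K_w = 𝟙_[0,w] ∗ 𝟙_[0,w]` (the `tent`). For every `s ∈ [a, b]`,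
`∫_{a/2}^b K_w(s) w⁻² dw + K_b(s) / b = 2 log 2`, the last term being the tail `∫_b^∞ s w⁻² dw`.
Integrating this against `h(s) T(s)x dν(s)` writes `2 log 2 · ∫ h(s) T(s)x dν(s)` as an average over
`w` of the vectors `∫ K_w(s) h(s) T(s)x dν(s) = ∫_0^w T(t) (μ ∗ F_w)(t) dt`, where
`F_w(r) = 𝟙_[-w,0](r) T(-r)x`. By Hölder on `[0, w]` and the convolution bound each has norm at
most `M · C · M‖x‖ · w`, and `∫_{a/2}^b w⁻¹ dw = log (2b/a)`.
-/

open MeasureTheory Set Real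
open scoped ENNReal

namespace Transference

/-- The length of `[0, w] ∩ [s - w, s]`. -/
noncomputable def tent (w s : ℝ) : ℝ := max 0 (min w s - max 0 (s - w))

lemma tent_nonneg (w s : ℝ) : 0 ≤ tent w s := le_max_left _ _

lemma tent_le {w : ℝ} (hw : 0 ≤ w) (s : ℝ) : tent w s ≤ w :=
  max_le hw (by linarith [min_le_left w s, le_max_left 0 (s - w)])

lemma tent_of_le {w s : ℝ} (hs : 0 ≤ s) (hsw : s ≤ w) : tent w s = s := by
  rw [tent, min_eq_right hsw, max_eq_left (show s - w ≤ 0 by linarith), sub_zero,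
    max_eq_right hs]

lemma tent_of_le_of_le {w s : ℝ} (hws : w ≤ s) (hs : s ≤ 2 * w) : tent w s = 2 * w - s := by
  rw [tent, min_eq_left hws, max_eq_right (show 0 ≤ s - w by linarith),
    max_eq_right (show 0 ≤ w - (s - w) by linarith)]
  ring

lemma tent_of_two_mul_le {w s : ℝ} (hw : 0 ≤ w) (hs : 2 * w ≤ s) : tent w s = 0 := by
  rw [tent, min_eq_left (show w ≤ s by linarith), max_eq_right (show 0 ≤ s - w by linarith),
    max_eq_left (show w - (s - w) ≤ 0 by linarith)]

lemma continuous_tent : Continuous fun z : ℝ × ℝ => tent z.1 z.2 := by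
  unfold tent; fun_prop

lemma setIntegral_indicator_sub_eq_tent (w s : ℝ) :
    ∫ t in Icc 0 w, (Icc 0 w).indicator 1 (s - t) = tent w s := by
  have h : ∀ t, (Icc 0 w).indicator (1 : ℝ → ℝ) (s - t) = (Icc (s - w) s).indicator 1 t := by
    intro t
    simp only [indicator_apply, mem_Icc]
    congr 1
    exact propext ⟨fun h => ⟨by linarith, by linarith⟩, fun h => ⟨by linarith, by linarith⟩⟩
  simp_rw [h]
  rw [integral_indicator measurableSet_Icc, Measure.restrict_restrict measurableSet_Icc,
    Icc_inter_Icc]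
  simp [tent, max_comm, min_comm]

lemma intervalIntegrable_tent_div_sq (s : ℝ) {u v : ℝ} (hu : 0 < u) (hv : 0 < v) :
    IntervalIntegrable (fun w => tent w s / w ^ 2) volume u v := by
  refine ContinuousOn.intervalIntegrable fun w hw => ?_
  have hw : w ≠ 0 := (lt_of_lt_of_le (lt_min hu hv) hw.1).ne'
  exact ((continuous_tent.comp (Continuous.prodMk_left s)).continuousAt.div
    (continuous_pow 2).continuousAt (pow_ne_zero 2 hw)).continuousWithinAt

lemma integral_tent_div_sq {c s b : ℝ} (hc : 0 < c) (hcs : 2 * c ≤ s) (hsb : s ≤ b) :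
    ∫ w in c..b, tent w s / w ^ 2 = 2 * log 2 - s / b := by
  have hs : 0 < s := by linarith
  have low : ∫ w in c..s / 2, tent w s / w ^ 2 = 0 := by
    refine (intervalIntegral.integral_congr fun w hw => ?_).trans intervalIntegral.integral_zero
    rw [uIcc_of_le (by linarith)] at hw
    simp [tent_of_two_mul_le (by linarith [hw.1]) (by linarith [hw.2] : 2 * w ≤ s)]
  have mid : ∫ w in s / 2..s, tent w s / w ^ 2 = 2 * log 2 - 1 := by
    rw [intervalIntegral.integral_eq_sub_of_hasDerivAt (f := fun w => 2 * log w + s * w⁻¹)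
      (fun w hw => ?_) (intervalIntegrable_tent_div_sq s (by linarith) hs)]
    · rw [show s / 2 = s * 2⁻¹ by ring, log_mul hs.ne' (by norm_num), log_inv]
      field_simp
      ring
    · rw [uIcc_of_le (by linarith)] at hw
      have hw0 : w ≠ 0 := by linarith [hw.1]
      refine (((hasDerivAt_log hw0).const_mul 2).add
        ((hasDerivAt_inv hw0).const_mul s)).congr_deriv ?_
      rw [tent_of_le_of_le hw.2 (by linarith [hw.1])]
      field_simp
      ring
  have high : ∫ w in s..b, tent w s / w ^ 2 = 1 - s / b := by
    rw [intervalIntegral.integral_eq_sub_of_hasDerivAt (f := fun w => -(s * w⁻¹))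
      (fun w hw => ?_) (intervalIntegrable_tent_div_sq s hs (by linarith))]
    · field_simp
      ring
    · rw [uIcc_of_le hsb] at hw
      have hw0 : w ≠ 0 := by linarith [hw.1]
      refine ((hasDerivAt_inv hw0).const_mul s).neg.congr_deriv ?_
      rw [tent_of_le hs.le hw.1]
      field_simp
  have hint (u v : ℝ) (hu : 0 < u) (hv : 0 < v) := intervalIntegrable_tent_div_sq s hu hv
  rw [← intervalIntegral.integral_add_adjacent_intervals (b := s)
      (hint c s hc hs) (hint s b hs (by linarith)),
    ← intervalIntegral.integral_add_adjacent_intervals (b := s / 2)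
      (hint c (s / 2) hc (by linarith)) (hint (s / 2) s (by linarith) hs), low, mid, high]
  ring

lemma setLIntegral_enorm_le_eLpNorm_mul_rpow {α E : Type*} [MeasurableSpace α] {μ : Measure α}
    [NormedAddCommGroup E] {f : α → E} {q : ℝ≥0∞} (hq : 1 ≤ q) (hf : AEStronglyMeasurable f μ)
    (s : Set α) : ∫⁻ x in s, ‖f x‖ₑ ∂μ ≤ eLpNorm f q μ * μ s ^ (1 - 1 / q.toReal) := by
  rw [← eLpNorm_one_eq_lintegral_enorm]
  calc eLpNorm f 1 (μ.restrict s)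
      ≤ eLpNorm f q (μ.restrict s) * μ.restrict s univ ^ (1 / (1 : ℝ≥0∞).toReal - 1 / q.toReal) :=
        eLpNorm_le_eLpNorm_mul_rpow_measure_univ hq hf.restrict
    _ ≤ eLpNorm f q μ * μ s ^ (1 - 1 / q.toReal) := by
        rw [Measure.restrict_apply_univ, ENNReal.toReal_one, div_one]
        gcongr
        exact Measure.restrict_le_self

section RealSpace

variable {X : Type*} [NormedAddCommGroup X] [NormedSpace ℝ X] [CompleteSpace X]

lemma integral_integral_smul_swap {α β : Type*} [MeasurableSpace α] [MeasurableSpace β]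
    {μ : Measure α} {ν : Measure β} [IsFiniteMeasure μ] [SFinite ν] {k : α → β → ℝ}
    (hk : AEStronglyMeasurable (Function.uncurry k) (μ.prod ν)) {K : ℝ}
    (hK : ∀ᵐ a ∂μ, ∀ b, ‖k a b‖ ≤ K) {g : β → X} (hg : Integrable g ν) :
    ∫ a, ∫ b, k a b • g b ∂ν ∂μ = ∫ b, (∫ a, k a b ∂μ) • g b ∂ν := by
  have hkg : Integrable (Function.uncurry fun a b => k a b • g b) (μ.prod ν) :=
    (hg.comp_snd μ).bdd_smul K hk (Measure.quasiMeasurePreserving_fst.ae hK |>.mono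
      fun z hz => hz z.2)
  simp_rw [integral_integral_swap hkg, integral_smul_const]

lemma two_mul_log_two_smul_integral_eq {ν : Measure ℝ} [SFinite ν] {a b : ℝ} (ha : 0 < a)
    (hab : a ≤ b) (hν : ∀ᵐ s ∂ν, s ∈ Icc a b) {g : ℝ → X} (hg : Integrable g ν) :
    (2 * log 2) • ∫ s, g s ∂ν =
      (∫ w in Ioc (a / 2) b, (w ^ 2)⁻¹ • ∫ s, tent w s • g s ∂ν) +
        b⁻¹ • ∫ s, tent b s • g s ∂ν := by
  have hb : 0 < b := ha.trans_le hab
  have hweight : ∀ᵐ s ∂ν, (2 * log 2 - tent b s / b) = ∫ w in Ioc (a / 2) b, tent w s / w ^ 2 := by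
    filter_upwards [hν] with s hs
    rw [← intervalIntegral.integral_of_le (by linarith),
      integral_tent_div_sq (by linarith) (by linarith [hs.1]) hs.2,
      tent_of_le (by linarith [hs.1]) hs.2]
  have hbdry : Integrable (fun s => (tent b s / b) • g s) ν :=
    hg.bdd_smul 1 (((continuous_tent.comp (Continuous.prodMk_right b) :
      Continuous (tent b)).div_const b).aestronglyMeasurable)
      (ae_of_all _ fun s => by
        rw [Real.norm_of_nonneg (div_nonneg (tent_nonneg b s) hb.le)]
        exact div_le_one_of_le₀ (tent_le hb.le s) hb.le)
  have hbound : ∀ᵐ w ∂volume.restrict (Ioc (a / 2) b), ∀ s, ‖tent w s / w ^ 2‖ ≤ (a / 2)⁻¹ := by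
    filter_upwards [ae_restrict_mem measurableSet_Ioc] with w hw s
    have hw0 : 0 < w := by linarith [hw.1]
    rw [Real.norm_of_nonneg (by have := tent_nonneg w s; positivity), div_le_iff₀ (by positivity)]
    calc tent w s ≤ w := tent_le hw0.le s
      _ = w⁻¹ * w ^ 2 := by field_simp
      _ ≤ (a / 2)⁻¹ * w ^ 2 := by gcongr; exact hw.1.le
  refine eq_add_of_sub_eq ?_
  calc (2 * log 2) • ∫ s, g s ∂ν - b⁻¹ • ∫ s, tent b s • g s ∂ν
      = ∫ s, (2 * log 2 - tent b s / b) • g s ∂ν := by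
        simp_rw [sub_smul]
        rw [integral_sub (hg.fun_smul (2 * log 2)) hbdry, integral_smul, ← integral_smul b⁻¹]
        simp_rw [smul_smul, div_eq_inv_mul]
    _ = ∫ s, (∫ w in Ioc (a / 2) b, tent w s / w ^ 2) • g s ∂ν :=
        integral_congr_ae (hweight.mono fun s hs => by simp only [hs])
    _ = ∫ w in Ioc (a / 2) b, ∫ s, (tent w s / w ^ 2) • g s ∂ν :=
        (integral_integral_smul_swap ((continuous_tent.measurable.div
          (measurable_fst.pow_const 2)).aestronglyMeasurable) hbound hg).symm
    _ = ∫ w in Ioc (a / 2) b, (w ^ 2)⁻¹ • ∫ s, tent w s • g s ∂ν := by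
        simp_rw [← integral_smul, smul_smul, div_eq_inv_mul]

lemma two_mul_log_two_mul_norm_integral_le {ν : Measure ℝ} [SFinite ν] {a b : ℝ} (ha : 0 < a)
    (hab : a ≤ b) (hν : ∀ᵐ s ∂ν, s ∈ Icc a b) {g : ℝ → X} (hg : Integrable g ν) {A : ℝ}
    (htent : ∀ w, 0 < w → ‖∫ s, tent w s • g s ∂ν‖ ≤ A * w) :
    2 * log 2 * ‖∫ s, g s ∂ν‖ ≤ A * (1 + log (2 * b / a)) := by
  have hb : 0 < b := ha.trans_le hab
  have hbulk : ‖∫ w in Ioc (a / 2) b, (w ^ 2)⁻¹ • ∫ s, tent w s • g s ∂ν‖ ≤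
      A * log (2 * b / a) := by
    have hinv : IntervalIntegrable (fun w : ℝ => A * w⁻¹) volume (a / 2) b :=
      (intervalIntegrable_inv_iff.2 (Or.inr fun h0 => by
        rw [uIcc_of_le (by linarith)] at h0; linarith [h0.1])).const_mul A
    refine (norm_integral_le_of_norm_le
      ((intervalIntegrable_iff_integrableOn_Ioc_of_le (by linarith)).1 hinv) ?_).trans_eq ?_
    · filter_upwards [ae_restrict_mem measurableSet_Ioc] with w hw
      have hw0 : 0 < w := by linarith [hw.1]
      rw [norm_smul, Real.norm_of_nonneg (by positivity)]
      calc (w ^ 2)⁻¹ * ‖∫ s, tent w s • g s ∂ν‖ ≤ (w ^ 2)⁻¹ * (A * w) := by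
            gcongr; exact htent w hw0
        _ = A * w⁻¹ := by field_simp
    · rw [integral_const_mul, ← intervalIntegral.integral_of_le (by linarith),
        integral_inv_of_pos (by linarith) hb]
      congr 2
      field_simp
  have hbdry : ‖b⁻¹ • ∫ s, tent b s • g s ∂ν‖ ≤ A := by
    rw [norm_smul, Real.norm_of_nonneg (inv_nonneg.2 hb.le), inv_mul_le_iff₀ hb, mul_comm]
    exact htent b hb
  calc 2 * log 2 * ‖∫ s, g s ∂ν‖ = ‖(2 * log 2) • ∫ s, g s ∂ν‖ := by
        rw [norm_smul, Real.norm_of_nonneg (by positivity)]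
    _ ≤ A * log (2 * b / a) + A := by
        rw [two_mul_log_two_smul_integral_eq ha hab hν hg]
        exact (norm_add_le _ _).trans (add_le_add hbulk hbdry)
    _ = A * (1 + log (2 * b / a)) := by ring

end RealSpace

section ComplexSpace

variable {X : Type*} [NormedAddCommGroup X] [NormedSpace ℂ X]
  {T : ℝ → X →L[ℂ] X} {E : ℝ → X} {ν : Measure ℝ} {h : ℝ → ℂ} {w B : ℝ}

lemma apply_indicator_neg_sub (hTE : ∀ t u, 0 ≤ t → 0 ≤ u → T t (E u) = E (t + u)) {t : ℝ}
    (ht : 0 ≤ t) (s : ℝ) :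
    T t ((Icc (-w) 0).indicator (fun r => E (-r)) (t - s)) =
      (Icc 0 w).indicator (1 : ℝ → ℝ) (s - t) • E s := by
  by_cases hst : s - t ∈ Icc 0 w
  · have hts : t - s ∈ Icc (-w) 0 := ⟨by linarith [hst.2], by linarith [hst.1]⟩
    rw [indicator_of_mem hts, indicator_of_mem hst, Pi.one_apply, one_smul, neg_sub,
      hTE t _ ht hst.1, add_sub_cancel]
  · have hts : t - s ∉ Icc (-w) 0 := fun h => hst ⟨by linarith [h.2], by linarith [h.1]⟩
    rw [indicator_of_notMem hts, indicator_of_notMem hst, map_zero, zero_smul]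

variable [CompleteSpace X]

lemma setIntegral_apply_convolution_eq [SFinite ν]
    (hTE : ∀ t u, 0 ≤ t → 0 ≤ u → T t (E u) = E (t + u)) (hE : Continuous E)
    (hEB : ∀ s, ‖E s‖ ≤ B) (hh : Integrable h ν) :
    ∫ t in Icc 0 w, T t (∫ s, h s • (Icc (-w) 0).indicator (fun r => E (-r)) (t - s) ∂ν) =
      ∫ s, tent w s • h s • E s ∂ν := by
  set F := (Icc (-w) 0).indicator fun r => E (-r)
  have hint : ∀ t, Integrable (fun s => h s • F (t - s)) ν := fun t =>
    hh.smul_bdd B (((hE.comp continuous_neg).stronglyMeasurable.indicator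
      measurableSet_Icc).comp_measurable (measurable_const.sub measurable_id)).aestronglyMeasurable
      (ae_of_all _ fun s => (norm_indicator_le_norm_self _ _).trans (hEB _))
  calc _ = ∫ t in Icc 0 w, ∫ s, (Icc 0 w).indicator (1 : ℝ → ℝ) (s - t) • h s • E s ∂ν := by
        refine setIntegral_congr_fun measurableSet_Icc fun t ht => ?_
        rw [← ContinuousLinearMap.integral_comp_comm _ (hint t)]
        simp_rw [map_smul, F, apply_indicator_neg_sub hTE ht.1, smul_comm (h _)]
    _ = ∫ s, (∫ t in Icc 0 w, (Icc 0 w).indicator (1 : ℝ → ℝ) (s - t)) • h s • E s ∂ν :=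
        integral_integral_smul_swap (k := fun t s => (Icc 0 w).indicator (1 : ℝ → ℝ) (s - t))
          (((measurable_one.indicator measurableSet_Icc).comp
            (measurable_snd.sub measurable_fst)).aestronglyMeasurable) (K := 1)
          (ae_of_all _ fun t s => norm_indicator_le_norm_self _ _ |>.trans (by simp))
          (hh.smul_bdd B hE.aestronglyMeasurable (ae_of_all _ hEB))
    _ = ∫ s, tent w s • h s • E s ∂ν := by simp_rw [setIntegral_indicator_sub_eq_tent]

lemma norm_integral_tent_smul_le [SFinite ν] {q : ℝ≥0∞} (hq : 1 ≤ q) {M C : ℝ} (hw : 0 < w)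
    (hT : ∀ t ∈ Icc 0 w, ‖T t‖ ≤ M) (hTE : ∀ t u, 0 ≤ t → 0 ≤ u → T t (E u) = E (t + u))
    (hE : Continuous E) (hEB : ∀ s, ‖E s‖ ≤ B) (hh : Integrable h ν) (hC : 0 ≤ C)
    (hconv : ∀ F : ℝ → X, MemLp F q volume →
      eLpNorm (fun t => ∫ s, h s • F (t - s) ∂ν) q volume ≤ ENNReal.ofReal C * eLpNorm F q volume) :
    ‖∫ s, tent w s • h s • E s ∂ν‖ ≤ M * C * B * w := by
  have hM : 0 ≤ M := (norm_nonneg _).trans (hT 0 ⟨le_rfl, hw.le⟩)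
  have hB : 0 ≤ B := (norm_nonneg _).trans (hEB 0)
  set F := (Icc (-w) 0).indicator fun r => E (-r)
  have hFm : StronglyMeasurable F :=
    (hE.comp continuous_neg).stronglyMeasurable.indicator measurableSet_Icc
  have hFB : ∀ r, ‖F r‖ ≤ ‖(Icc (-w) 0).indicator (fun _ => B) r‖ := fun r => by
    by_cases hr : r ∈ Icc (-w) 0
    · simp only [F, indicator_of_mem hr, Real.norm_of_nonneg hB, hEB]
    · simp [F, indicator_of_notMem hr]
  have hFq : eLpNorm F q volume ≤ ENNReal.ofReal B * ENNReal.ofReal w ^ (1 / q.toReal) := by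
    refine (eLpNorm_mono hFB).trans ((eLpNorm_indicator_const_le B q).trans_eq ?_)
    rw [Real.volume_Icc, sub_neg_eq_add, zero_add, Real.enorm_of_nonneg hB]
  have hF : MemLp F q volume :=
    ⟨hFm.aestronglyMeasurable, hFq.trans_lt (by finiteness)⟩
  set G := fun t => ∫ s, h s • F (t - s) ∂ν
  have hG : AEStronglyMeasurable G volume :=
    (hh.aestronglyMeasurable.comp_snd.smul (hFm.comp_measurable
      (measurable_fst.sub measurable_snd)).aestronglyMeasurable).integral_prod_right'
  rw [← setIntegral_apply_convolution_eq hTE hE hEB hh,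
    ← ENNReal.ofReal_le_ofReal_iff (by positivity), ofReal_norm]
  calc ‖∫ t in Icc 0 w, T t (G t)‖ₑ ≤ ∫⁻ t in Icc 0 w, ‖T t (G t)‖ₑ :=
        enorm_integral_le_lintegral_enorm _
    _ ≤ ∫⁻ t in Icc 0 w, ENNReal.ofReal M * ‖G t‖ₑ := by
        refine setLIntegral_mono' measurableSet_Icc fun t ht => ?_
        rw [← ofReal_norm, ← ofReal_norm, ← ENNReal.ofReal_mul hM]
        exact ENNReal.ofReal_le_ofReal ((T t).le_of_opNorm_le (hT t ht) _)
    _ = ENNReal.ofReal M * ∫⁻ t in Icc 0 w, ‖G t‖ₑ := lintegral_const_mul' _ _ ENNReal.ofReal_ne_top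
    _ ≤ ENNReal.ofReal M * (ENNReal.ofReal C *
          (ENNReal.ofReal B * ENNReal.ofReal w ^ (1 / q.toReal)) *
            ENNReal.ofReal w ^ (1 - 1 / q.toReal)) := by
        gcongr
        refine (setLIntegral_enorm_le_eLpNorm_mul_rpow hq hG _).trans ?_
        rw [Real.volume_Icc, sub_zero]
        gcongr
        exact (hconv F hF).trans (by gcongr)
    _ = ENNReal.ofReal M * ENNReal.ofReal C * ENNReal.ofReal B *
          (ENNReal.ofReal w ^ (1 / q.toReal) * ENNReal.ofReal w ^ (1 - 1 / q.toReal)) := by ring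
    _ = ENNReal.ofReal (M * C * B * w) := by
        rw [← ENNReal.rpow_add _ _ (by simpa using hw) ENNReal.ofReal_ne_top, add_sub_cancel,
          ENNReal.rpow_one, ← ENNReal.ofReal_mul hM, ← ENNReal.ofReal_mul (by positivity),
          ← ENNReal.ofReal_mul (by positivity)]

end ComplexSpace

end Transference

open Transference

theorem transference_semigroup_bounded (p : ℝ) (hp : 1 < p) :
    ∃ c : ℝ, 0 ≤ c ∧
      ∀ (X : Type*) [NormedAddCommGroup X] [NormedSpace ℂ X] [CompleteSpace X],
      ∀ T : ℝ → X →L[ℂ] X,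
        T 0 = 1 →
        (∀ s ≥ (0:ℝ), ∀ t ≥ (0:ℝ), T (s + t) = (T s).comp (T t)) →
        (∀ x : X, ContinuousOn (fun s => T s x) (Set.Ici 0)) →
      ∀ M : ℝ, (∀ s : ℝ, 0 ≤ s → ‖T s‖ ≤ M) →
      ∀ a b : ℝ, 0 < a → a < b →
      ∀ ν : Measure ℝ, IsFiniteMeasure ν → ν (Set.Icc a b)ᶜ = 0 →
      ∀ h : ℝ → ℂ, Integrable h ν →
      ∀ C : ℝ, 0 ≤ C →
        (∀ F : ℝ → X, MemLp F (ENNReal.ofReal p) volume →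
          eLpNorm (fun t => ∫ s, h s • F (t - s) ∂ν) (ENNReal.ofReal p) volume
            ≤ ENNReal.ofReal C * eLpNorm F (ENNReal.ofReal p) volume) →
      ∀ x : X,
        ‖∫ s, h s • T s x ∂ν‖ ≤ c * M ^ 2 * (1 + Real.log (b / a)) * C * ‖x‖ := by
  have hlog2 : 0 < log 2 := log_pos one_lt_two
  refine ⟨(1 + log 2) / (2 * log 2), div_nonneg (by linarith) (by linarith), ?_⟩
  intro X _ _ _ T _ hT hTx M hM a b ha hab ν _ hνab h hh C hC hconv x
  set E : ℝ → X := fun s => T (max s 0) x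
  have hE : Continuous E :=
    (hTx x).comp_continuous (continuous_id.max continuous_const) fun s => le_max_right s 0
  have hEB : ∀ s, ‖E s‖ ≤ M * ‖x‖ := fun s => (T _).le_of_opNorm_le (hM _ (le_max_right s 0)) x
  have hTE : ∀ t u, 0 ≤ t → 0 ≤ u → T t (E u) = E (t + u) := fun t u ht hu => by
    simp only [E, max_eq_left hu, max_eq_left (add_nonneg ht hu), hT t ht u hu,
      ContinuousLinearMap.comp_apply]
  have hsupp : ∀ᵐ s ∂ν, s ∈ Icc a b := ae_iff.2 hνab
  have hY : ∫ s, h s • T s x ∂ν = ∫ s, h s • E s ∂ν :=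
    integral_congr_ae (hsupp.mono fun s hs => by simp [E, max_eq_left (ha.le.trans hs.1)])
  have hbound := two_mul_log_two_mul_norm_integral_le ha hab.le hsupp
    (hh.smul_bdd _ hE.aestronglyMeasurable (ae_of_all _ hEB)) fun w hw =>
      norm_integral_tent_smul_le (ENNReal.one_le_ofReal.2 hp.le) hw (fun t ht => hM t ht.1) hTE
        hE hEB hh hC hconv
  have hM0 : 0 ≤ M := (norm_nonneg _).trans (hM 0 le_rfl)
  have hL : 0 ≤ log (b / a) := log_nonneg ((one_le_div ha).2 hab.le)
  have hlog : log (2 * b / a) = log 2 + log (b / a) := by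
    rw [mul_div_assoc, log_mul two_ne_zero (div_pos (ha.trans hab) ha).ne']
  rw [hY, ← mul_le_mul_iff_right₀ (by linarith : 0 < 2 * log 2)]
  refine hbound.trans ?_
  rw [hlog]
  calc M * C * (M * ‖x‖) * (1 + (log 2 + log (b / a)))
      ≤ M * C * (M * ‖x‖) * ((1 + log 2) * (1 + log (b / a))) := by
        gcongr; nlinarith
    _ = _ := by field_simp
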